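/- arXiv:0905.4276 — 3 statements merged into one kernel-verified Lean document; each statement's English description precedes it below -/
import Mathlib

section
/- (Boshernitzan) The unit square [0,1]² is a universal minimality detector: for every compact metric space (X,d) and every sequence x̄ = (x_1,x_2,...) ∈ X^ℕ that is not minimal, there exists a continuous function f : X → [0,1]² such that the sequence (f(x_1),f(x_2),...) ∈ ([0,1]²)^ℕ is not minimal. -/
open Set unitInterval

/-- The left shift `S` on sequences: `S(x₁,x₂,x₃,…) = (x₂,x₃,…)`. -/
def shiftSeq {X : Type*} (z : ℕ → X) : ℕ → X := fun n => z (n + 1)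

/-- The closure of the forward shift-orbit `{z, Sz, S²z, …}` of a sequence `z`,
inside the sequence space `ℕ → X`.  (For a compact metric space `X` the product
topology on `ℕ → X` is exactly the topology of the metric
`d̄(x̄,ȳ) = ∑ᵢ d(xᵢ,yᵢ)/2ⁱ`.) -/
def shiftOrbitClosure {X : Type*} [TopologicalSpace X] (z : ℕ → X) : Set (ℕ → X) :=
  closure (Set.range fun k => shiftSeq^[k] z)

/-- A sequence `z` is *minimal* if the closure of its shift-orbit is a minimal
dynamical system under the shift, i.e. every point of this closure has dense
forward orbit in it. -/
def IsMinimalSeq {X : Type*} [TopologicalSpace X] (z : ℕ → X) : Prop :=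
  ∀ w ∈ shiftOrbitClosure z, shiftOrbitClosure z ⊆ shiftOrbitClosure w

lemma shiftSeq_iterate {X : Type*} (z : ℕ → X) (k : ℕ) :
    shiftSeq^[k] z = fun n => z (n + k) := by
  induction k with
  | zero => simp
  | succ k ih =>
    funext n
    rw [Function.iterate_succ_apply', ih]
    show z (n + 1 + k) = z (n + (k + 1))
    congr 1
    omega

lemma continuous_shiftSeq_iterate {X : Type*} [TopologicalSpace X] (k : ℕ) :
    Continuous fun z : ℕ → X => shiftSeq^[k] z := by
  have : (fun z : ℕ → X => shiftSeq^[k] z) = fun z n => z (n + k) :=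
    funext fun z => shiftSeq_iterate z k
  rw [this]
  exact continuous_pi fun n => continuous_apply _

lemma mem_shiftOrbitClosure_self {X : Type*} [TopologicalSpace X] (z : ℕ → X) :
    z ∈ shiftOrbitClosure z :=
  subset_closure ⟨0, by simp⟩

lemma shiftOrbitClosure_subset {X : Type*} [TopologicalSpace X] {a b : ℕ → X}
    (h : a ∈ shiftOrbitClosure b) : shiftOrbitClosure a ⊆ shiftOrbitClosure b := by
  have hR : Set.range (fun j => shiftSeq^[j] a) ⊆ shiftOrbitClosure b := by
    rintro _ ⟨j, rfl⟩
    have hc := continuous_shiftSeq_iterate (X := X) j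
    have hmem : shiftSeq^[j] a ∈
        (fun z : ℕ → X => shiftSeq^[j] z) '' closure (Set.range fun i => shiftSeq^[i] b) :=
      ⟨a, h, rfl⟩
    have h2 := image_closure_subset_closure_image hc hmem
    refine closure_mono ?_ h2
    rintro _ ⟨_, ⟨i, rfl⟩, rfl⟩
    exact ⟨j + i, by simp [Function.iterate_add_apply]⟩
  exact closure_minimal hR isClosed_closure

lemma exists_separating {X : Type*} [MetricSpace X] (T : Finset X) :
    ∃ (h : X → ℝ) (η C : ℝ), 0 < η ∧ 0 < C ∧ Continuous h ∧
      (∀ p, h p ∈ Set.Icc (0:ℝ) 1) ∧ (∀ p q, |h p - h q| ≤ C * dist p q) ∧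
      (∀ a ∈ T, ∀ b ∈ T, a ≠ b → η ≤ |h a - h b|) := by
  classical
  induction T using Finset.induction_on with
  | empty =>
      exact ⟨fun _ => 0, 1, 1, one_pos, one_pos, continuous_const,
        fun p => ⟨le_refl 0, zero_le_one⟩, fun p q => by simpa using dist_nonneg, by simp⟩
  | @insert a s ha ih =>
      obtain ⟨h, η, C, hη, hC, hcont, hmem, hlip, hsep⟩ := ih
      rcases s.eq_empty_or_nonempty with hs | hs
      · subst hs
        refine ⟨h, η, C, hη, hC, hcont, hmem, hlip, ?_⟩
        intro a' ha' b hb hne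
        simp only [Finset.mem_insert, Finset.notMem_empty, or_false] at ha' hb
        exact absurd (ha'.trans hb.symm) hne
      · set ρ := s.inf' hs (fun b => dist a b) with hρdef
        have hρ : 0 < ρ := by
          rw [Finset.lt_inf'_iff]
          intro b hb
          exact dist_pos.mpr (fun hab => ha (hab ▸ hb))
        set β : X → ℝ := fun p => max 0 (1 - dist p a / ρ) with hβdef
        have hβa : β a = 1 := by simp [hβdef]
        have hβb : ∀ b ∈ s, β b = 0 := by
          intro b hb
          have h1 : ρ ≤ dist b a := by
            rw [dist_comm]; exact Finset.inf'_le _ hb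
          have h2 : (1:ℝ) ≤ dist b a / ρ := (one_le_div hρ).mpr h1
          simp only [hβdef]
          rw [max_eq_left (by linarith)]
        have hβ0 : ∀ p, 0 ≤ β p := fun p => le_max_left _ _
        have hβ1 : ∀ p, β p ≤ 1 := by
          intro p
          apply max_le zero_le_one
          have : 0 ≤ dist p a / ρ := div_nonneg dist_nonneg hρ.le
          linarith
        have hβlip : ∀ p q, |β p - β q| ≤ (1/ρ) * dist p q := by
          intro p q
          have h1 : |β p - β q| ≤ |(1 - dist p a / ρ) - (1 - dist q a / ρ)| := by
            simp only [hβdef, max_comm (0:ℝ)]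
            exact abs_max_sub_max_le_abs _ _ _
          have h2 : (1 - dist p a / ρ) - (1 - dist q a / ρ) = (dist q a - dist p a) / ρ := by
            ring
          have h3 : |dist q a - dist p a| ≤ dist q p := abs_dist_sub_le _ _ _
          calc |β p - β q| ≤ |(dist q a - dist p a) / ρ| := by rw [← h2]; exact h1
            _ = |dist q a - dist p a| / ρ := by rw [abs_div, abs_of_pos hρ]
            _ ≤ dist q p / ρ := by gcongr
            _ = (1/ρ) * dist p q := by rw [dist_comm]; ring
        refine ⟨fun p => (h p + 2 * β p)/3, min η 1 / 3, (C + 2/ρ)/3, ?_, ?_, ?_, ?_, ?_, ?_⟩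
        · positivity
        · positivity
        · apply Continuous.div_const
          apply hcont.add
          apply Continuous.mul continuous_const
          apply Continuous.max continuous_const
          exact continuous_const.sub ((continuous_id.dist continuous_const).div_const _)
        · intro p
          have h0 := (hmem p).1
          have h1 := (hmem p).2
          have h2 := hβ1 p
          have h3 := hβ0 p
          constructor
          · positivity
          · rw [div_le_one (by norm_num : (0:ℝ) < 3)]
            linarith
        · intro p q
          have h1 : (h p + 2 * β p)/3 - (h q + 2 * β q)/3 = ((h p - h q) + 2*(β p - β q))/3 := by
            ring
          rw [h1, abs_div, abs_of_pos (by norm_num : (0:ℝ) < 3)]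
          have h2 := hlip p q
          have h3 := hβlip p q
          have h4 : |h p - h q + 2*(β p - β q)| ≤ |h p - h q| + 2*|β p - β q| := by
            calc _ ≤ |h p - h q| + |2*(β p - β q)| := abs_add_le _ _
              _ = |h p - h q| + 2*|β p - β q| := by rw [abs_mul]; norm_num
          rw [div_le_iff₀ (by norm_num : (0:ℝ) < 3)]
          have hd : 0 ≤ dist p q := dist_nonneg
          calc |h p - h q + 2*(β p - β q)| ≤ |h p - h q| + 2*|β p - β q| := h4
            _ ≤ C * dist p q + 2*((1/ρ) * dist p q) := by linarith
            _ = (C + 2/ρ)/3 * dist p q * 3 := by ring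
        · intro a' ha' b hb hne
          have key : ∀ c ∈ s, min η 1 / 3 ≤ |(h a + 2 * β a)/3 - (h c + 2 * β c)/3| := by
            intro c hc
            rw [hβa, hβb c hc]
            have h1 := (hmem a).1
            have h2 := (hmem c).2
            have h3 : (h a + 2*1)/3 - (h c + 2*0)/3 = (h a + 2 - h c)/3 := by ring
            rw [h3, abs_div, abs_of_pos (by norm_num : (0:ℝ) < 3)]
            have h4 : (1:ℝ) ≤ h a + 2 - h c := by linarith
            have h5 : min η 1 ≤ 1 := min_le_right _ _
            have h6 : |h a + 2 - h c| = h a + 2 - h c := abs_of_pos (by linarith)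
            rw [h6]
            linarith
          rcases Finset.mem_insert.mp ha' with rfl | ha's
          · rcases Finset.mem_insert.mp hb with rfl | hbs
            · exact absurd rfl hne
            · exact key b hbs
          · rcases Finset.mem_insert.mp hb with rfl | hbs
            · rw [abs_sub_comm]; exact key a' ha's
            · have := hsep a' ha's b hbs hne
              show (η ⊓ 1)/3 ≤ |(h a' + 2 * β a')/3 - (h b + 2 * β b)/3|
              rw [hβb a' ha's, hβb b hbs]
              have h3 : (h a' + 2*0)/3 - (h b + 2*0)/3 = (h a' - h b)/3 := by ring
              rw [h3, abs_div, abs_of_pos (by norm_num : (0:ℝ) < 3)]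
              have h5 : min η 1 ≤ η := min_le_left _ _
              have h6 : η ≤ |h a' - h b| := this
              linarith

/-- (Boshernitzan) `[0,1]²` is a universal minimality detector. -/
theorem unitSquare_is_universal_minimality_detector
    {X : Type*} [MetricSpace X] [CompactSpace X]
    (x : ℕ → X) (hx : ¬ IsMinimalSeq x) :
    ∃ f : X → I × I, Continuous f ∧ ¬ IsMinimalSeq (fun n => f (x n)) := by
  classical
  -- Step 1: find w in the orbit closure of x with x ∉ shiftOrbitClosure w
  obtain ⟨w, hwZ, hxw⟩ : ∃ w, w ∈ shiftOrbitClosure x ∧ x ∉ shiftOrbitClosure w := by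
    simp only [IsMinimalSeq, not_forall] at hx
    obtain ⟨w, hwZ, hsub⟩ := hx
    exact ⟨w, hwZ, fun hxin => hsub (shiftOrbitClosure_subset hxin)⟩
  -- Step 2: extract a finite-coordinate open separation
  have hopen : IsOpen (shiftOrbitClosure w)ᶜ := isClosed_closure.isOpen_compl
  obtain ⟨Ifin, u, hu, hsub⟩ := isOpen_pi_iff.mp hopen x hxw
  have hIne : Ifin.Nonempty := by
    rcases Ifin.eq_empty_or_nonempty with h | h
    · exfalso
      subst h
      have hw1 : w ∈ (↑(∅ : Finset ℕ) : Set ℕ).pi u := by simp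
      exact hsub hw1 (mem_shiftOrbitClosure_self w)
    · exact h
  have Hr : ∀ i : ℕ, ∃ δ : ℝ, 0 < δ ∧ (i ∈ Ifin → Metric.ball (x i) δ ⊆ u i) := by
    intro i
    by_cases hi : i ∈ Ifin
    · obtain ⟨δ, hδ, hball⟩ := Metric.isOpen_iff.mp (hu i hi).1 (x i) (hu i hi).2
      exact ⟨δ, hδ, fun _ => hball⟩
    · exact ⟨1, one_pos, fun hmem => absurd hmem hi⟩
  choose r hr0 hrb using Hr
  set δ : ℝ := Ifin.inf' hIne r with hδdef
  have hδ : 0 < δ := by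
    rw [hδdef, Finset.lt_inf'_iff]
    exact fun i _ => hr0 i
  have key : ∀ k : ℕ, ∃ i ∈ Ifin, δ ≤ dist (x i) (w (i + k)) := by
    intro k
    have hmem : shiftSeq^[k] w ∈ shiftOrbitClosure w := subset_closure ⟨k, rfl⟩
    have hnot : shiftSeq^[k] w ∉ (↑Ifin : Set ℕ).pi u := fun hp => hsub hp hmem
    rw [Set.mem_pi] at hnot
    push_neg at hnot
    obtain ⟨i, hi, hiu⟩ := hnot
    refine ⟨i, hi, ?_⟩
    have hnb : shiftSeq^[k] w i ∉ Metric.ball (x i) (r i) := fun hb => hiu (hrb i hi hb)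
    rw [shiftSeq_iterate] at hnb
    simp only [Metric.mem_ball, not_lt] at hnb
    calc δ ≤ r i := Finset.inf'_le _ hi
      _ ≤ dist (w (i + k)) (x i) := hnb
      _ = dist (x i) (w (i + k)) := dist_comm _ _
  -- Step 3: construct f = (g, h)
  obtain ⟨h, η, C, hη, hC, hcont, hmem01, hlip, hsep⟩ := exists_separating (Ifin.image x)
  set δ'' : ℝ := min (δ/2) (η/(2*C)) with hδ''def
  have hδ'' : 0 < δ'' := lt_min (by linarith) (by positivity)
  set T : Set X := ↑(Ifin.image x) with hTdef
  set g : X → ℝ := fun p => min 1 (Metric.infDist p T / δ'') with hgdef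
  have hg01 : ∀ p, g p ∈ Set.Icc (0:ℝ) 1 := by
    intro p
    exact ⟨le_min zero_le_one (div_nonneg Metric.infDist_nonneg hδ''.le), min_le_left _ _⟩
  have hgcont : Continuous g :=
    continuous_const.min ((Metric.continuous_infDist_pt T).div_const _)
  set f : X → I × I := fun p => (⟨g p, hg01 p⟩, ⟨h p, hmem01 p⟩) with hfdef
  have hfcont : Continuous f := by
    apply Continuous.prodMk
    · exact hgcont.subtype_mk _
    · exact hcont.subtype_mk _
  set γ : ℝ := min 1 (η/2) with hγdef
  have hγ : 0 < γ := lt_min one_pos (by positivity)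
  -- Step 4: uniform separation of image sequences
  have sep : ∀ k : ℕ, ∃ i ∈ Ifin, γ ≤ dist (f (x i)) (f (w (i + k))) := by
    intro k
    obtain ⟨i, hi, hdist⟩ := key k
    refine ⟨i, hi, ?_⟩
    set z := w (i + k) with hz
    have hxiT : x i ∈ T := by
      rw [hTdef]; exact Finset.mem_coe.mpr (Finset.mem_image_of_mem x hi)
    by_cases hcase : Metric.infDist z T < δ''
    · obtain ⟨b, hbT, hbz⟩ := (Metric.infDist_lt_iff ⟨x i, hxiT⟩).mp hcase
      have hbT' : b ∈ Ifin.image x := Finset.mem_coe.mp hbT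
      have hne : x i ≠ b := by
        intro heq
        have h2 : δ'' ≤ δ/2 := min_le_left _ _
        rw [← heq, dist_comm] at hbz
        linarith [hdist]
      have hsepab : η ≤ |h (x i) - h b| :=
        hsep _ (Finset.mem_image_of_mem x hi) _ hbT' hne
      have hbz' : |h b - h z| ≤ C * δ'' := by
        calc |h b - h z| ≤ C * dist b z := hlip b z
          _ ≤ C * δ'' := by
              have hd : dist b z < δ'' := by rwa [dist_comm]
              nlinarith
      have hCδ : C * δ'' ≤ η/2 := by
        have h1 : δ'' ≤ η/(2*C) := min_le_right _ _
        have h2 : C * (η/(2*C)) = η/2 := by field_simp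
        nlinarith
      have hfinal : η/2 ≤ |h (x i) - h z| := by
        have htri : |h (x i) - h b| ≤ |h (x i) - h z| + |h z - h b| := abs_sub_le _ _ _
        rw [abs_sub_comm (h z) (h b)] at htri
        linarith
      calc γ ≤ η/2 := min_le_right _ _
        _ ≤ |h (x i) - h z| := hfinal
        _ = dist ((f (x i)).2) ((f z).2) := by
            rw [hfdef]; rw [Subtype.dist_eq, Real.dist_eq]
        _ ≤ dist (f (x i)) (f z) := by rw [Prod.dist_eq]; exact le_max_right _ _
    · push_neg at hcase
      have hgz : g z = 1 := by
        rw [hgdef]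
        apply min_eq_left
        rw [le_div_iff₀ hδ'']
        linarith
      have hgxi : g (x i) = 0 := by
        rw [hgdef]
        simp [Metric.infDist_zero_of_mem hxiT]
      calc γ ≤ 1 := min_le_left _ _
        _ = |g (x i) - g z| := by rw [hgxi, hgz]; norm_num
        _ = dist ((f (x i)).1) ((f z).1) := by
            rw [hfdef]; rw [Subtype.dist_eq, Real.dist_eq]
        _ ≤ dist (f (x i)) (f z) := by rw [Prod.dist_eq]; exact le_max_left _ _
  -- Step 5: conclude non-minimality of the image sequence
  refine ⟨f, hfcont, ?_⟩
  intro hmin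
  set y : ℕ → I × I := fun n => f (x n) with hydef
  set w' : ℕ → I × I := fun n => f (w n) with hw'def
  have hFc : Continuous (fun (z : ℕ → X) (n : ℕ) => f (z n)) :=
    continuous_pi fun n => hfcont.comp (continuous_apply n)
  have hcomm : ∀ (k : ℕ) (z : ℕ → X),
      (fun n => f ((shiftSeq^[k] z) n)) = shiftSeq^[k] (fun n => f (z n)) := by
    intro k z
    rw [shiftSeq_iterate, shiftSeq_iterate]
  have hw'mem : w' ∈ shiftOrbitClosure y := by
    have h1 : w' ∈ (fun (z : ℕ → X) => fun n => f (z n)) ''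
        closure (Set.range fun k => shiftSeq^[k] x) := ⟨w, hwZ, rfl⟩
    have h2 := image_closure_subset_closure_image hFc h1
    refine closure_mono ?_ h2
    rintro _ ⟨_, ⟨k, rfl⟩, rfl⟩
    exact ⟨k, (hcomm k x).symm⟩
  have hy_in_w' : y ∈ shiftOrbitClosure w' :=
    hmin w' hw'mem (mem_shiftOrbitClosure_self y)
  set U : Set (ℕ → I × I) :=
    ⋂ i ∈ Ifin, (fun v : ℕ → I × I => v i) ⁻¹' Metric.ball (y i) γ with hUdef
  have hUopen : IsOpen U :=
    isOpen_biInter_finset fun i _ =>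
      (continuous_apply i).isOpen_preimage _ Metric.isOpen_ball
  have hyU : y ∈ U := by
    rw [hUdef]
    simp only [Set.mem_iInter, Set.mem_preimage, Metric.mem_ball]
    intro i _
    simpa using hγ
  obtain ⟨v, hvU, hvS⟩ := mem_closure_iff.mp hy_in_w' U hUopen hyU
  obtain ⟨k, hk⟩ := hvS
  obtain ⟨i, hi, hsepi⟩ := sep k
  have hveq : v i = f (w (i + k)) := by
    rw [← hk]
    show shiftSeq^[k] w' i = f (w (i + k))
    rw [shiftSeq_iterate]
  have hvi : v i ∈ Metric.ball (y i) γ := by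
    have := Set.mem_iInter₂.mp hvU i hi
    exact this
  rw [Metric.mem_ball, hveq] at hvi
  have hyi : y i = f (x i) := rfl
  rw [hyi, dist_comm] at hvi
  exact absurd hsepi (not_le.mpr hvi)
end

section
/- Every finite block of a 2-Toeplitz sequence ā appears in ā with bounded gaps; more precisely, if (a_j,...,a_{j+r}) is a block of ā and b_i is the term of B of largest index occurring among a_j,...,a_{j+r}, then this block occurs (exactly, as a consecutive sub-block) within every block of 2^{i+1} consecutive terms of ā. -/
open Set unitInterval

/-- The 2-Toeplitz sequence of `B = (b 0, b 1, …)` (all sequences 0-indexed):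
its `n`-th term is `b p` where `2 ^ p` exactly divides `n + 1`; equivalently the
term at (1-indexed) position `j` is `b_i` for all `j ≡ 2^(i-1) (mod 2^i)`. -/
def toeplitz2 {X : Type*} (b : ℕ → X) : ℕ → X :=
  fun n => b (padicValNat 2 (n + 1))

/-!
Every term `a_{j+t}` of the block is `b` evaluated at the 2-adic valuation of `j + t + 1`, which
is `< i`. A valuation below `i` only depends on the residue mod `2 ^ i`, so the block reappears
at every position `s ≡ j [MOD 2 ^ i]`, and each window of `2 ^ i` consecutive positions contains
such an `s`. As any `r + 1` consecutive integers contain a multiple of `2 ^ ⌊log₂ (r + 1)⌋`, also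
`r + 1 < 2 ^ i`, so this occurrence ends within `2 ^ (i + 1)` terms of the window's start.
-/

theorem Nat.exists_modEq_mem_Ico (a : ℕ) {n : ℕ} (hn : 0 < n) (m : ℕ) :
    ∃ s ∈ Set.Ico m (m + n), s ≡ a [MOD n] := by
  obtain ⟨k, rfl⟩ : ∃ k, n = k + 1 := ⟨n - 1, by omega⟩
  refine ⟨m + (a + k * m) % (k + 1),
    ⟨Nat.le_add_right _ _, Nat.add_lt_add_left (Nat.mod_lt _ hn) m⟩, ?_⟩
  calc m + (a + k * m) % (k + 1) ≡ m + (a + k * m) [MOD k + 1] := (Nat.mod_modEq _ _).add_left m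
    _ = a + (k + 1) * m := by ring
    _ ≡ a [MOD k + 1] := Nat.add_mul_mod_self_left a (k + 1) m

theorem padicValNat_eq_of_modEq_pow {p a c i : ℕ} (hp : p ≠ 1) (ha : a ≠ 0) (hc : c ≠ 0)
    (h : a ≡ c [MOD p ^ i]) (hci : padicValNat p c < i) :
    padicValNat p a = padicValNat p c := by
  have hle_iff : ∀ k ≤ i, k ≤ padicValNat p a ↔ k ≤ padicValNat p c := fun k hk => by
    rw [← padicValNat_dvd_iff_le_of_ne_one hp ha, ← padicValNat_dvd_iff_le_of_ne_one hp hc]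
    exact h.dvd_iff (pow_dvd_pow p hk)
  refine le_antisymm ?_ ((hle_iff _ hci.le).mpr le_rfl)
  by_contra! hgt
  exact absurd ((hle_iff _ hci).mp hgt) (by omega)

theorem lt_pow_succ_sup_padicValNat {p : ℕ} (hp : 1 < p) (j r : ℕ) :
    r + 1 < p ^ ((Finset.range (r + 1)).sup (fun t => padicValNat p (j + t + 1)) + 1) := by
  set L := Nat.log p (r + 1)
  have hL : p ^ L ≤ r + 1 := Nat.pow_log_le_self p (Nat.succ_ne_zero r)
  obtain ⟨n, ⟨hjn, hnj⟩, hn⟩ :=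
    Nat.exists_modEq_mem_Ico 0 (Nat.pow_pos (by omega : 0 < p)) (j + 1)
  have hLn : L ≤ padicValNat p n :=
    (padicValNat_dvd_iff_le_of_ne_one hp.ne' (by omega)).mp (Nat.modEq_zero_iff_dvd.mp hn)
  have hLsup : L ≤ (Finset.range (r + 1)).sup (fun t => padicValNat p (j + t + 1)) := by
    refine hLn.trans (le_of_eq_of_le ?_ (Finset.le_sup (f := fun t => padicValNat p (j + t + 1))
      (Finset.mem_range.mpr (show n - (j + 1) < r + 1 by omega))))
    congr 1; omega
  exact (Nat.lt_pow_succ_log_self hp (r + 1)).trans_le (Nat.pow_le_pow_right (by omega) (by omega))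

/-- Every finite block of a 2-Toeplitz sequence appears with bounded gaps: if
`(a_j, …, a_{j+r})` is a block (0-indexed) of the 2-Toeplitz sequence `ā` of `b`,
and `b_i` (1-indexed, so `i = 1 + ` the largest 2-adic valuation occurring) is
the term of `B` of largest index occurring in the block, then this block occurs
exactly as a consecutive sub-block within every block of `2^(i+1)` consecutive
terms of `ā`. -/
theorem toeplitz2_block_appears_with_bounded_gaps
    {X : Type*} (b : ℕ → X) (j r : ℕ) (i : ℕ)
    (hi : i = ((Finset.range (r + 1)).sup fun t => padicValNat 2 (j + t + 1)) + 1) :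
    ∀ m : ℕ, ∃ s : ℕ, m ≤ s ∧ s + r + 1 ≤ m + 2 ^ (i + 1) ∧
      ∀ t ≤ r, toeplitz2 b (s + t) = toeplitz2 b (j + t) := by
  intro m
  obtain ⟨s, ⟨hms, hsm⟩, hsj⟩ := Nat.exists_modEq_mem_Ico j (Nat.two_pow_pos i) m
  have hr : r + 1 < 2 ^ i := hi ▸ lt_pow_succ_sup_padicValNat one_lt_two j r
  refine ⟨s, hms, by rw [pow_succ]; omega, fun t ht => ?_⟩
  have hval : padicValNat 2 (j + t + 1) < i :=
    hi ▸ Nat.lt_succ_of_le (Finset.le_sup (f := fun t => padicValNat 2 (j + t + 1))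
      (Finset.mem_range.mpr (Nat.lt_succ_of_le ht)))
  exact congrArg b <|
    padicValNat_eq_of_modEq_pow (by norm_num) (by omega) (by omega) (hsj.add_right (t + 1)) hval
end

section
/- Let B = (b_1,b_2,...) be a sequence whose terms lie in a compact metric space (X,d). Then the 2-Toeplitz sequence associated with B is a minimal sequence in X^ℕ. -/
open Set unitInterval

/-!
The 2-Toeplitz sequence is regularly recurrent: its first `L` terms repeat along every
shift by a multiple of `2 ^ L`, since adding a multiple of `2 ^ L` to `n + 1 < 2 ^ L` does not
change its 2-adic valuation. For a regularly recurrent `z` with period `P` for the window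
`[0, L)`, the sequences some shift by at most `P` of which agrees with `z` on `[0, L)` form a
closed set containing the orbit of `z`, hence every `w` in its orbit closure. So `z` lies in the
orbit closure of `w`, and the two orbit closures coincide.
-/

theorem padicValNat_add_mul_pow {p n m : ℕ} [Fact p.Prime] (hn : n ≠ 0) (hnm : n < p ^ m)
    (k : ℕ) : padicValNat p (n + k * p ^ m) = padicValNat p n := by
  set v := padicValNat p n
  have hv_lt : v < m := (Nat.pow_lt_pow_iff_right (Nat.Prime.one_lt Fact.out)).mp <|
    (Nat.le_of_dvd (Nat.pos_of_ne_zero hn) pow_padicValNat_dvd).trans_lt hnm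
  have hsum : n + k * p ^ m ≠ 0 := by omega
  apply le_antisymm
  · by_contra! hgt
    have hdvd : p ^ (v + 1) ∣ n + k * p ^ m := (padicValNat_dvd_iff_le hsum).mpr hgt
    rw [Nat.dvd_add_left (Dvd.dvd.mul_left (pow_dvd_pow p hv_lt) k)] at hdvd
    exact pow_succ_padicValNat_not_dvd hn hdvd
  · exact (padicValNat_dvd_iff_le hsum).mp
      (dvd_add pow_padicValNat_dvd (Dvd.dvd.mul_left (pow_dvd_pow p hv_lt.le) k))

def IsRegularlyRecurrent {X : Type*} (z : ℕ → X) : Prop :=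
  ∀ L, ∃ P > 0, ∀ n < L, ∀ k, z (n + k * P) = z n

section

variable {X : Type*}

theorem shiftSeq_iterate_apply (z : ℕ → X) (k n : ℕ) : shiftSeq^[k] z n = z (n + k) := by
  induction k generalizing z with
  | zero => rfl
  | succ k ih => rw [Function.iterate_succ_apply, ih]; rfl

variable [TopologicalSpace X]

theorem continuous_shiftSeq : Continuous (shiftSeq (X := X)) :=
  continuous_pi fun n => continuous_apply (n + 1)

theorem shiftOrbitClosure_subset_of_mem {z w : ℕ → X} (h : z ∈ shiftOrbitClosure w) :
    shiftOrbitClosure z ⊆ shiftOrbitClosure w := by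
  refine closure_minimal (range_subset_iff.mpr fun k => ?_) isClosed_closure
  have hk : shiftSeq^[k] '' range (fun i => shiftSeq^[i] w) ⊆ range (fun i => shiftSeq^[i] w) := by
    rintro _ ⟨_, ⟨i, rfl⟩, rfl⟩
    exact ⟨k + i, Function.iterate_add_apply _ k i w⟩
  exact closure_mono hk <|
    image_closure_subset_closure_image (continuous_shiftSeq.iterate k) ⟨z, h, rfl⟩

theorem mem_shiftOrbitClosure_of_forall_exists_eqOn {z w : ℕ → X}
    (h : ∀ L, ∃ j, ∀ n < L, shiftSeq^[j] w n = z n) : z ∈ shiftOrbitClosure w := by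
  choose j hj using h
  refine mem_closure_of_tendsto (b := Filter.atTop) (tendsto_pi_nhds.mpr fun n => ?_)
    (Filter.Eventually.of_forall fun L => mem_range_self (j L))
  refine tendsto_const_nhds.congr' ?_
  filter_upwards [Filter.eventually_gt_atTop n] with L hL
  exact (hj L n hL).symm

variable [T1Space X]

theorem IsRegularlyRecurrent.exists_iterate_eqOn {z w : ℕ → X} (hz : IsRegularlyRecurrent z)
    (hw : w ∈ shiftOrbitClosure z) (L : ℕ) : ∃ j, ∀ n < L, shiftSeq^[j] w n = z n := by
  obtain ⟨P, hP, hper⟩ := hz L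
  set C : Set (ℕ → X) := ⋃ j ∈ Iic P, {x | ∀ n < L, x (n + j) = z n}
  have hC : IsClosed C := by
    refine (finite_Iic P).isClosed_biUnion fun j _ => ?_
    simp only [ofPred_forall]
    exact isClosed_iInter fun n => isClosed_iInter fun _ =>
      isClosed_singleton.preimage (continuous_apply (n + j))
  -- `P - k % P` realigns the shift by `k` to a multiple of the period.
  have horbit : range (fun k => shiftSeq^[k] z) ⊆ C := by
    refine range_subset_iff.mpr fun k => ?_
    have hk : k + (P - k % P) = (k / P + 1) * P := by
      have := Nat.div_add_mod' k P; have := Nat.mod_lt k hP; rw [add_mul]; omega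
    refine mem_biUnion (mem_Iic.mpr (Nat.sub_le P (k % P))) fun n hn => ?_
    rw [shiftSeq_iterate_apply, add_assoc, add_comm _ k, hk, hper n hn]
  obtain ⟨j, -, hj⟩ := mem_iUnion₂.mp (closure_minimal horbit hC hw)
  exact ⟨j, fun n hn => (shiftSeq_iterate_apply w j n).trans (hj n hn)⟩

theorem IsRegularlyRecurrent.isMinimalSeq {z : ℕ → X} (hz : IsRegularlyRecurrent z) :
    IsMinimalSeq z := fun _ hw => shiftOrbitClosure_subset_of_mem <|
  mem_shiftOrbitClosure_of_forall_exists_eqOn (hz.exists_iterate_eqOn hw)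

end

theorem toeplitz2_isRegularlyRecurrent {X : Type*} (b : ℕ → X) :
    IsRegularlyRecurrent (toeplitz2 b) := by
  refine fun L => ⟨2 ^ L, by positivity, fun n hn k => ?_⟩
  have hlt : n + 1 < 2 ^ L := by have := @Nat.lt_two_pow_self L; omega
  simp only [toeplitz2, Nat.add_right_comm n, padicValNat_add_mul_pow n.succ_ne_zero hlt]

theorem toeplitz2_isMinimalSeq_general
    {X : Type*} [MetricSpace X] (b : ℕ → X) :
    IsMinimalSeq (toeplitz2 b) :=
  (toeplitz2_isRegularlyRecurrent b).isMinimalSeq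

/-- The 2-Toeplitz sequence of any sequence with values in a compact metric
space is minimal. -/
theorem toeplitz2_isMinimalSeq
    {X : Type*} [MetricSpace X] [CompactSpace X] (b : ℕ → X) :
    IsMinimalSeq (toeplitz2 b) :=
  toeplitz2_isMinimalSeq_general b
end
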